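/- Let A be a one-counter automaton without zero tests, with state set Q, and let (p,c) →^x (q,d) be a run with d − c > |Q|. Then there exists an integer k > 0 and a factorization x = y₁y₂y₃ such that for every N ≥ 0 there is a run from (p,c) to some configuration with counter value d + N·k reading the word y₁(y₂)^{N+1}y₃. In particular the word read is a superword of x. -/
import Mathlib


/-- Counter actions of a one-counter automaton. -/
inductive CAct
  | inc | dec | internal | zero
deriving DecidableEq

/-- A one-counter automaton: transitions labelled by an optional letter
(ε-transitions allowed) and a counter action. -/
structure OCA (Q A : Type) where
  trans : Set (Q × Option A × CAct × Q)
  start : Q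
  final : Set Q

/-- One step of an OCA on configurations (state, counter ∈ ℕ). -/
def OCA.Step {Q A : Type} (M : OCA Q A) (x : Q × ℕ) (a : Option A) (y : Q × ℕ) : Prop :=
  ((x.1, a, CAct.inc, y.1) ∈ M.trans ∧ y.2 = x.2 + 1) ∨
  ((x.1, a, CAct.dec, y.1) ∈ M.trans ∧ x.2 = y.2 + 1) ∨
  ((x.1, a, CAct.internal, y.1) ∈ M.trans ∧ y.2 = x.2) ∨
  ((x.1, a, CAct.zero, y.1) ∈ M.trans ∧ x.2 = 0 ∧ y.2 = 0)

/-- A run of an OCA from a configuration to a configuration, reading a word. -/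
inductive OCA.Run {Q A : Type} (M : OCA Q A) : Q × ℕ → List A → Q × ℕ → Prop
  | nil (x : Q × ℕ) : OCA.Run M x [] x
  | cons {x y z : Q × ℕ} {a : Option A} {w : List A} :
      M.Step x a y → OCA.Run M y w z → OCA.Run M x (a.toList ++ w) z

namespace OCA
variable {Q A : Type} {M : OCA Q A}

lemma Run.append' {x y z : Q × ℕ} {w1 w2 : List A}
    (h1 : M.Run x w1 y) (h2 : M.Run y w2 z) : M.Run x (w1 ++ w2) z := by
  induction h1 with
  | nil x => exact h2
  | cons hs _ ih => rw [List.append_assoc]; exact .cons hs (ih h2)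

lemma Run.shift (hz : ∀ t ∈ M.trans, t.2.2.1 ≠ CAct.zero) (j : ℕ)
    {x y : Q × ℕ} {w : List A} (h : M.Run x w y) :
    M.Run (x.1, x.2 + j) w (y.1, y.2 + j) := by
  induction h with
  | nil x => exact .nil _
  | cons hs _ ih =>
    refine .cons ?_ ih
    rcases hs with ⟨ht, hc⟩ | ⟨ht, hc⟩ | ⟨ht, hc⟩ | ⟨ht, _⟩
    · exact Or.inl ⟨ht, by simpa using by omega⟩
    · exact Or.inr (Or.inl ⟨ht, by simpa using by omega⟩)
    · exact Or.inr (Or.inr (Or.inl ⟨ht, by simpa using by omega⟩))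
    · exact absurd rfl (hz _ ht)

lemma Step.le' {x : Q × ℕ} {a : Option A} {y : Q × ℕ} (h : M.Step x a y) :
    y.2 ≤ x.2 + 1 := by
  rcases h with ⟨_, h⟩ | ⟨_, h⟩ | ⟨_, h⟩ | ⟨_, h, h'⟩ <;> omega

lemma Run.cross {x y : Q × ℕ} {w : List A} (h : M.Run x w y) :
    ∀ e, x.2 ≤ e → e ≤ y.2 → ∃ r w1 w2, w = w1 ++ w2 ∧
      M.Run x w1 (r, e) ∧ M.Run (r, e) w2 y := by
  induction h with
  | nil x =>
    intro e h1 h2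
    have he : e = x.2 := le_antisymm h2 h1
    subst he
    exact ⟨x.1, [], [], rfl, by simpa using Run.nil x, by simpa using Run.nil x⟩
  | @cons x₀ y₀ z₀ a w hs hr ih =>
    intro e h1 h2
    by_cases he : e = x₀.2
    · subst he
      exact ⟨x₀.1, [], a.toList ++ w, rfl, by simpa using Run.nil x₀,
        by simpa using Run.cons hs hr⟩
    · have hy : y₀.2 ≤ e := le_trans hs.le' (by omega)
      obtain ⟨r, w1, w2, hw, hr1, hr2⟩ := ih e hy h2
      exact ⟨r, a.toList ++ w1, w2, by rw [hw, List.append_assoc],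
        Run.cons hs hr1, hr2⟩

inductive Climb (M : OCA Q A) : Q × ℕ → List (Q × List A) → Q × ℕ → Prop
  | nil (x : Q × ℕ) : Climb M x [] x
  | cons {p : Q} {c : ℕ} {r : Q} {w : List A} {L : List (Q × List A)} {y : Q × ℕ} :
      M.Run (p, c) w (r, c + 1) → Climb M (r, c + 1) L y →
      Climb M (p, c) ((r, w) :: L) y

lemma Climb.run {x y : Q × ℕ} {L : List (Q × List A)} (h : Climb M x L y) :
    M.Run x ((L.map Prod.snd).flatten) y := by
  induction h with
  | nil x => exact .nil _
  | cons hr _ ih => simpa using hr.append' ih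

lemma Climb.level {x y : Q × ℕ} {L : List (Q × List A)} (h : Climb M x L y) :
    y.2 = x.2 + L.length := by
  induction h with
  | nil x => simp
  | cons _ _ ih => simp at ih ⊢; omega

lemma Climb.det {x y y' : Q × ℕ} {L : List (Q × List A)}
    (h : Climb M x L y) (h' : Climb M x L y') : y = y' := by
  induction h generalizing y' with
  | nil x => cases h'; rfl
  | cons _ _ ih => cases h' with | cons _ h2 => exact ih h2

lemma Climb.append {x y z : Q × ℕ} {L1 L2 : List (Q × List A)}
    (h1 : Climb M x L1 y) (h2 : Climb M y L2 z) : Climb M x (L1 ++ L2) z := by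
  induction h1 with
  | nil x => exact h2
  | cons hr _ ih => exact .cons hr (ih h2)

lemma Climb.take {x y : Q × ℕ} {L : List (Q × List A)} (h : Climb M x L y) :
    ∀ i ≤ L.length, ∃ r, Climb M x (L.take i) (r, x.2 + i) ∧
      Climb M (r, x.2 + i) (L.drop i) y := by
  induction h with
  | nil x =>
    intro i hi
    simp at hi; subst hi
    exact ⟨x.1, by simpa using Climb.nil x, by simpa using Climb.nil x⟩
  | @cons p c r w L y hr hc ih =>
    intro i hi
    match i with
    | 0 => exact ⟨p, by simpa using Climb.nil (p, c), by simpa using Climb.cons hr hc⟩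
    | (i' + 1) =>
      obtain ⟨r', h1, h2⟩ := ih i' (by simpa using hi)
      have harith : c + 1 + i' = c + (i' + 1) := by omega
      rw [harith] at h1 h2
      exact ⟨r', Climb.cons hr h1, h2⟩

lemma climb_of_run : ∀ (n : ℕ) (p : Q) (c : ℕ) (x : List A) {q d},
    M.Run (p, c) x (q, d) → c + n ≤ d →
    ∃ (L : List (Q × List A)) (suf : List A) (s : Q),
      Climb M (p, c) L (s, c + n) ∧ L.length = n ∧
      M.Run (s, c + n) suf (q, d) ∧ x = (L.map Prod.snd).flatten ++ suf := by
  intro n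
  induction n with
  | zero => intro p c x q d h _; exact ⟨[], x, p, by simpa using Climb.nil (p, c), rfl, by simpa using h, by simp⟩
  | succ n ih =>
    intro p c x q d h hle
    obtain ⟨r, w1, w2, hw, h1, h2⟩ := h.cross (c + 1) (by omega) (by omega)
    obtain ⟨L, suf, s, hc, hlen, hrs, hx⟩ := ih r (c + 1) w2 h2 (by omega)
    have harith : c + 1 + n = c + (n + 1) := by omega
    rw [harith] at hc hrs
    exact ⟨(r, w1) :: L, suf, s, Climb.cons h1 hc, by simp [hlen],
      hrs, by simp [hw, hx, List.append_assoc]⟩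

lemma Run.pow (hz : ∀ t ∈ M.trans, t.2.2.1 ≠ CAct.zero) {r : Q} {e k : ℕ} {y : List A}
    (h : M.Run (r, e) y (r, e + k)) :
    ∀ N, M.Run (r, e) ((List.replicate (N + 1) y).flatten) (r, e + (N + 1) * k) := by
  intro N
  induction N with
  | zero => simpa using h
  | succ n ih =>
    have h2 := ih.shift hz k
    simp only at h2
    have harith : e + (n + 1) * k + k = e + (n + 1 + 1) * k := by ring
    rw [harith] at h2
    have := h.append' h2
    simpa [List.replicate_succ (n := n + 1)] using this

end OCA

/-- Pumping up: for an OCA without zero tests, a run (p,c) →^x (q,d) with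
d − c > |Q| contains an iterable segment: x = y₁y₂y₃ and there is k > 0 such
that for each N ≥ 0 there is a run from (p,c) reading y₁(y₂)^{N+1}y₃ to some
configuration with counter value d + N·k. -/
theorem pump_up {Q A : Type} [Fintype Q] (M : OCA Q A)
    (hz : ∀ t ∈ M.trans, t.2.2.1 ≠ CAct.zero)
    (p q : Q) (c d : ℕ) (x : List A)
    (hrun : M.Run (p, c) x (q, d))
    (hgap : c + Fintype.card Q < d) :
    ∃ k : ℕ, 0 < k ∧ ∃ y₁ y₂ y₃ : List A, x = y₁ ++ y₂ ++ y₃ ∧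
      ∀ N : ℕ, ∃ q' : Q,
        M.Run (p, c) (y₁ ++ (List.replicate (N + 1) y₂).flatten ++ y₃) (q', d + N * k) := by
  classical
  set n := Fintype.card Q with hn
  obtain ⟨L, suf, s, hclimb, hlen, hsuf, hx⟩ :=
    OCA.climb_of_run n p c x hrun (by omega)
  -- states at each level
  have htake : ∀ i : Fin (n + 1), ∃ r, OCA.Climb M (p, c) (L.take i) (r, c + i) ∧
      OCA.Climb M (r, c + i) (L.drop i) (s, c + n) := by
    intro i
    have := hclimb.take i (by omega)
    simpa using this
  choose f hf1 hf2 using htake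
  have hcard : Fintype.card Q < Fintype.card (Fin (n + 1)) := by simp [hn]
  obtain ⟨a, b, hab, hfeq⟩ := Fintype.exists_ne_map_eq_of_card_lt f hcard
  -- wlog a < b
  obtain ⟨i, j, hij, hfij⟩ : ∃ i j : Fin (n + 1), (i : ℕ) < j ∧ f i = f j := by
    rcases lt_or_gt_of_ne (fun h => hab (Fin.ext h) : (a : ℕ) ≠ b) with h | h
    · exact ⟨a, b, h, hfeq⟩
    · exact ⟨b, a, h, hfeq.symm⟩
  set r : Q := f i with hr
  set k : ℕ := (j : ℕ) - i with hk
  have hkpos : 0 < k := by omega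
  -- middle climb from level c+i to level c+j
  obtain ⟨r', hm1, hm2⟩ := (hf2 i).take k (by
    have := j.isLt
    simp [hk, hlen]
    omega)
  -- identify r' with f j
  have hcomb : OCA.Climb M (p, c) (L.take i ++ (L.drop i).take k) (r', c + i + k) :=
    (hf1 i).append hm1
  have htj : L.take i ++ (L.drop i).take k = L.take j := by
    rw [← List.take_add]
    congr 1
    omega
  have hcij : c + i + k = c + j := by omega
  rw [htj, hcij] at hcomb
  have hr' : r' = f j := by
    have := hcomb.det (hf1 j)
    exact (Prod.mk.injEq _ _ _ _).mp this |>.1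
  rw [hr', ← hfij, ← hr] at hm1 hm2
  rw [hcij] at hm1 hm2
  -- drop (j) part
  have hdd : (L.drop i).drop k = L.drop j := by
    rw [List.drop_drop]
    congr 1
    omega
  rw [hdd] at hm2
  -- the three pieces
  refine ⟨k, hkpos, ((L.take i).map Prod.snd).flatten,
    (((L.drop i).take k).map Prod.snd).flatten,
    ((L.drop j).map Prod.snd).flatten ++ suf, ?_, ?_⟩
  · have hL : L = L.take i ++ ((L.drop i).take k ++ L.drop j) := by
      rw [← hdd, List.take_append_drop, List.take_append_drop]
    rw [hx]
    conv_lhs => rw [hL]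
    simp [List.append_assoc]
  · intro N
    refine ⟨q, ?_⟩
    have run1 : M.Run (p, c) (((L.take i).map Prod.snd).flatten) (r, c + i) :=
      (hf1 i).run
    have hcik : c + (j : ℕ) = c + i + k := by omega
    have run2 : M.Run (r, c + i) ((((L.drop i).take k).map Prod.snd).flatten)
        (r, c + i + k) := by
      have := hm1.run
      rwa [hcik] at this
    have run3 : M.Run (r, c + i + k) (((L.drop j).map Prod.snd).flatten ++ suf) (q, d) := by
      have := hm2.run.append' hsuf
      rwa [hcik] at this
    have run2N := run2.pow hz N
    have run3N := run3.shift hz (N * k)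
    simp only at run3N
    have harith : c + i + (N + 1) * k = c + i + k + N * k := by ring
    rw [harith] at run2N
    simpa [List.append_assoc] using run1.append' (run2N.append' run3N)
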